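/- Assume δ < r_I and (1-θ)·β·p·T_max/(c·r_I) < 1, and set T̃₂ = (r_I - δ)·T⁰/(r_I - δ·R₀). Then: (i) if R₀ ≤ 1 then h₂(T̃₂) ≥ 0; (ii) if 1 < R₀ < r_I/δ then h₂(T̃₂) < 0. Consequently the positive root T* of h₂ satisfies T* ≥ T̃₂ when R₀ ≤ 1 and T* < T̃₂ when 1 < R₀ < r_I/δ. -/

import Mathlib

open Set

/-- The uninfected equilibrium value `T⁰`. -/
noncomputable def hcvT0 (s rT dT Tmax : ℝ) : ℝ :=
  Tmax / (2 * rT) * (rT - dT + Real.sqrt ((rT - dT) ^ 2 + 4 * rT * s / Tmax))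

/-- The basic reproduction number `R₀` (with `1 - θ = (1-ε)(1-η)`). -/
noncomputable def hcvR0 (s rT rI dT dI Tmax β p q c η ε : ℝ) : ℝ :=
  rI / (dI + q) * (1 - hcvT0 s rT dT Tmax / Tmax)
    + (1 - ε) * (1 - η) * β * p * hcvT0 s rT dT Tmax / (c * (dI + q))

/-- The quadratic polynomial `h₂` (with `δ = d_I + q`, `A = (1-θ)βpT_max/c`). -/
noncomputable def hcvH2 (s rT rI dT dI Tmax β p q c η ε : ℝ) (T : ℝ) : ℝ :=
  s + q * (Tmax / rI) * (rI - (dI + q))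
    + (rT - (dT + q) - (rT / rI) * (rI - (dI + q))
        - ((1 - ε) * (1 - η) * β * p * Tmax / c / rI) * (rI - (dI + q))
        + ((1 - ε) * (1 - η) * β * p * Tmax / c) * q / rI) * T
    - (rT / Tmax) * (((1 - ε) * (1 - η) * β * p * Tmax / c) ^ 2 / (rI * rT)
        + ((1 - ε) * (1 - η) * β * p * Tmax / c) / rI
        - ((1 - ε) * (1 - η) * β * p * Tmax / c) / rT) * T ^ 2

/-!
With `A = (1-θ)βpT_max/c` and `g(T) = s + (r_T - d_T) T - (r_T/T_max) T²`, whose positive root is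
`T⁰`, one has the identity `r_I T_max (h₂ - g)(T) = ((r_I - A) T - (r_I - δ) T_max) ((r_T + A) T - q T_max)`,
and `(r_I - A) T̃₂ = (r_I - δ) T_max`. Hence `h₂(T̃₂) = g(T̃₂)`, which is nonnegative exactly when
`T̃₂ ≤ T⁰`, i.e. when `R₀ ≤ 1`, because `(r_I - A)(T⁰ - T̃₂) = δ (1 - R₀) T_max`. Since `h₂` is a
quadratic with positive constant term and nonpositive leading coefficient, the sign of `h₂(T̃₂)` locates
`T̃₂` relative to the positive root `T*`.
-/

noncomputable def hcvA (Tmax β p c η ε : ℝ) : ℝ :=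
  (1 - ε) * (1 - η) * β * p * Tmax / c

/-- Left side of the uninfected-equilibrium equation `s + r_T T (1 - T/T_max) - d_T T = 0`. -/
noncomputable def hcvG (s rT dT Tmax T : ℝ) : ℝ :=
  s + (rT - dT) * T - rT / Tmax * T ^ 2

noncomputable def hcvT2 (s rT rI dT dI Tmax β p q c η ε : ℝ) : ℝ :=
  (rI - (dI + q)) * hcvT0 s rT dT Tmax / (rI - (dI + q) * hcvR0 s rT rI dT dI Tmax β p q c η ε)

theorem nonneg_quadratic_iff_le_root {a b k t r : ℝ} (ha : 0 < a) (hk : 0 ≤ k) (ht : 0 ≤ t)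
    (hr : 0 < r) (hroot : a + b * r - k * r ^ 2 = 0) :
    0 ≤ a + b * t - k * t ^ 2 ↔ t ≤ r := by
  have hfactor : (a + b * t - k * t ^ 2) * r = (r - t) * (k * t * r + a) := by
    linear_combination t * hroot
  rw [← mul_nonneg_iff_of_pos_right hr, hfactor,
    mul_nonneg_iff_of_pos_right (by positivity), sub_nonneg]

section

variable {s rT rI dT dI Tmax β p q c η ε : ℝ}

theorem hcvT0_pos (hs : 0 < s) (hrT : 0 < rT) (hTmax : 0 < Tmax) : 0 < hcvT0 s rT dT Tmax := by
  have hsqrt : |rT - dT| < Real.sqrt ((rT - dT) ^ 2 + 4 * rT * s / Tmax) := by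
    rw [Real.lt_sqrt (abs_nonneg _), sq_abs]
    have : 0 < 4 * rT * s / Tmax := by positivity
    linarith
  have : 0 < rT - dT + Real.sqrt ((rT - dT) ^ 2 + 4 * rT * s / Tmax) := by
    linarith [neg_abs_le (rT - dT)]
  unfold hcvT0
  positivity

theorem hcvG_hcvT0 (hs : 0 ≤ s) (hrT : 0 < rT) (hTmax : 0 < Tmax) :
    hcvG s rT dT Tmax (hcvT0 s rT dT Tmax) = 0 := by
  unfold hcvG hcvT0
  set u := Real.sqrt ((rT - dT) ^ 2 + 4 * rT * s / Tmax)
  have hu : u ^ 2 = (rT - dT) ^ 2 + 4 * rT * s / Tmax := Real.sq_sqrt (by positivity)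
  field_simp at hu ⊢
  linear_combination (-1) * hu

theorem hcvG_nonneg_iff_le_hcvT0 {T : ℝ} (hs : 0 < s) (hrT : 0 < rT) (hTmax : 0 < Tmax)
    (hT : 0 ≤ T) : 0 ≤ hcvG s rT dT Tmax T ↔ T ≤ hcvT0 s rT dT Tmax :=
  nonneg_quadratic_iff_le_root hs (by positivity) hT (hcvT0_pos hs hrT hTmax)
    (hcvG_hcvT0 hs.le hrT hTmax)

theorem sub_hcvA_mul_hcvT0 (hδ : dI + q ≠ 0) (hc : c ≠ 0) (hTmax : Tmax ≠ 0) :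
    (rI - hcvA Tmax β p c η ε) * hcvT0 s rT dT Tmax
      = (rI - (dI + q) * hcvR0 s rT rI dT dI Tmax β p q c η ε) * Tmax := by
  unfold hcvR0 hcvA
  field_simp
  ring

theorem sub_hcvA_mul_hcvT2 (hδ : dI + q ≠ 0) (hc : c ≠ 0) (hTmax : Tmax ≠ 0)
    (hA : rI - hcvA Tmax β p c η ε ≠ 0) (hT0 : hcvT0 s rT dT Tmax ≠ 0) :
    (rI - hcvA Tmax β p c η ε) * hcvT2 s rT rI dT dI Tmax β p q c η ε
      = (rI - (dI + q)) * Tmax := by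
  have h := sub_hcvA_mul_hcvT0 hδ hc hTmax (rI := rI) (β := β) (p := p) (η := η) (ε := ε)
    (s := s) (rT := rT) (dT := dT)
  have hR0 : rI - (dI + q) * hcvR0 s rT rI dT dI Tmax β p q c η ε ≠ 0 :=
    left_ne_zero_of_mul (h ▸ mul_ne_zero hA hT0)
  unfold hcvT2
  field_simp
  linear_combination (rI - (dI + q)) * h

theorem hcvH2_eq_hcvG_add (hrI : rI ≠ 0) (hrT : rT ≠ 0) (hTmax : Tmax ≠ 0) (T : ℝ) :
    hcvH2 s rT rI dT dI Tmax β p q c η ε T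
      = hcvG s rT dT Tmax T
        + ((rI - hcvA Tmax β p c η ε) * T - (rI - (dI + q)) * Tmax)
          * ((rT + hcvA Tmax β p c η ε) * T - q * Tmax) / (rI * Tmax) := by
  unfold hcvH2 hcvG
  rw [show (1 - ε) * (1 - η) * β * p * Tmax / c = hcvA Tmax β p c η ε from rfl]
  generalize hcvA Tmax β p c η ε = A
  field_simp
  ring

theorem hcvH2_nonneg_iff_le_root {T R : ℝ} (hs : 0 < s) (hq : 0 ≤ q) (hδ : dI + q ≤ rI)
    (hrI : 0 < rI) (hrIT : rI ≤ rT) (hTmax : 0 < Tmax) (hA : 0 ≤ hcvA Tmax β p c η ε)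
    (hT : 0 ≤ T) (hR : 0 < R) (hroot : hcvH2 s rT rI dT dI Tmax β p q c η ε R = 0) :
    0 ≤ hcvH2 s rT rI dT dI Tmax β p q c η ε T ↔ T ≤ R := by
  have hrT : 0 < rT := hrI.trans_le hrIT
  set A := hcvA Tmax β p c η ε
  have hconst : 0 < s + q * (Tmax / rI) * (rI - (dI + q)) := by
    have := sub_nonneg.2 hδ
    positivity
  have hlead : 0 ≤ rT / Tmax * (A ^ 2 / (rI * rT) + A / rI - A / rT) := by
    rw [show rT / Tmax * (A ^ 2 / (rI * rT) + A / rI - A / rT)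
        = A * (A + (rT - rI)) / (rI * Tmax) by field_simp; ring]
    have := sub_nonneg.2 hrIT
    positivity
  exact nonneg_quadratic_iff_le_root hconst hlead hT hR hroot

theorem hcvT2_pos (hs : 0 < s) (hrT : 0 < rT) (hTmax : 0 < Tmax) (hc : c ≠ 0)
    (hδ : 0 < dI + q) (hδrI : dI + q < rI)
    (hA : hcvA Tmax β p c η ε < rI) : 0 < hcvT2 s rT rI dT dI Tmax β p q c η ε := by
  refine pos_of_mul_pos_right ?_ (sub_pos.2 hA).le
  rw [sub_hcvA_mul_hcvT2 hδ.ne' hc hTmax.ne' (sub_pos.2 hA).ne' (hcvT0_pos hs hrT hTmax).ne']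
  exact mul_pos (sub_pos.2 hδrI) hTmax

theorem hcvT2_le_hcvT0_iff (hs : 0 < s) (hrT : 0 < rT) (hTmax : 0 < Tmax) (hc : c ≠ 0)
    (hδ : 0 < dI + q)
    (hA : hcvA Tmax β p c η ε < rI) :
    hcvT2 s rT rI dT dI Tmax β p q c η ε ≤ hcvT0 s rT dT Tmax
      ↔ hcvR0 s rT rI dT dI Tmax β p q c η ε ≤ 1 := by
  have hdiff : (rI - hcvA Tmax β p c η ε)
        * (hcvT0 s rT dT Tmax - hcvT2 s rT rI dT dI Tmax β p q c η ε)
      = (dI + q) * Tmax * (1 - hcvR0 s rT rI dT dI Tmax β p q c η ε) := by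
    rw [mul_sub, sub_hcvA_mul_hcvT0 hδ.ne' hc hTmax.ne',
      sub_hcvA_mul_hcvT2 hδ.ne' hc hTmax.ne' (sub_pos.2 hA).ne' (hcvT0_pos hs hrT hTmax).ne']
    ring
  rw [← sub_nonneg, ← sub_nonneg (b := hcvR0 _ _ _ _ _ _ _ _ _ _ _ _),
    ← mul_nonneg_iff_of_pos_left (sub_pos.2 hA), hdiff,
    mul_nonneg_iff_of_pos_left (by positivity)]

theorem hcvH2_hcvT2_nonneg_iff (hs : 0 < s) (hrT : 0 < rT) (hTmax : 0 < Tmax) (hc : c ≠ 0)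
    (hδ : 0 < dI + q) (hδrI : dI + q < rI)
    (hA : hcvA Tmax β p c η ε < rI) :
    0 ≤ hcvH2 s rT rI dT dI Tmax β p q c η ε (hcvT2 s rT rI dT dI Tmax β p q c η ε)
      ↔ hcvR0 s rT rI dT dI Tmax β p q c η ε ≤ 1 := by
  have hrI : 0 < rI := hδ.trans hδrI
  rw [hcvH2_eq_hcvG_add hrI.ne' hrT.ne' hTmax.ne',
    sub_hcvA_mul_hcvT2 hδ.ne' hc hTmax.ne' (sub_pos.2 hA).ne' (hcvT0_pos hs hrT hTmax).ne',
    sub_self, zero_mul, zero_div, add_zero,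
    hcvG_nonneg_iff_le_hcvT0 hs hrT hTmax (hcvT2_pos hs hrT hTmax hc hδ hδrI hA).le,
    hcvT2_le_hcvT0_iff hs hrT hTmax hc hδ hA]

end

theorem hcv_root_location_delta_lt_general
    (s rT rI dT dI Tmax β p q c η ε : ℝ)
    (hs : 0 < s) (hdI : 0 < dI)
    (hTmax : 0 < Tmax) (hβ : 0 < β) (hp : 0 < p) (hq : 0 < q) (hc : 0 < c)
    (hη : η ∈ Set.Ico (0 : ℝ) 1) (hε : ε ∈ Set.Ico (0 : ℝ) 1)
    (hrIT : rI ≤ rT)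
    (hδ : dI + q < rI)
    (hA : (1 - ε) * (1 - η) * β * p * Tmax / (c * rI) < 1) :
    (hcvR0 s rT rI dT dI Tmax β p q c η ε ≤ 1 →
      0 ≤ hcvH2 s rT rI dT dI Tmax β p q c η ε
        ((rI - (dI + q)) * hcvT0 s rT dT Tmax
          / (rI - (dI + q) * hcvR0 s rT rI dT dI Tmax β p q c η ε))) ∧
    (1 < hcvR0 s rT rI dT dI Tmax β p q c η ε →
      hcvR0 s rT rI dT dI Tmax β p q c η ε < rI / (dI + q) →
      hcvH2 s rT rI dT dI Tmax β p q c η ε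
        ((rI - (dI + q)) * hcvT0 s rT dT Tmax
          / (rI - (dI + q) * hcvR0 s rT rI dT dI Tmax β p q c η ε)) < 0) ∧
    (∀ Tstar : ℝ, 0 < Tstar →
      hcvH2 s rT rI dT dI Tmax β p q c η ε Tstar = 0 →
      (hcvR0 s rT rI dT dI Tmax β p q c η ε ≤ 1 →
        (rI - (dI + q)) * hcvT0 s rT dT Tmax
          / (rI - (dI + q) * hcvR0 s rT rI dT dI Tmax β p q c η ε) ≤ Tstar) ∧
      (1 < hcvR0 s rT rI dT dI Tmax β p q c η ε →
        hcvR0 s rT rI dT dI Tmax β p q c η ε < rI / (dI + q) →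
        Tstar < (rI - (dI + q)) * hcvT0 s rT dT Tmax
          / (rI - (dI + q) * hcvR0 s rT rI dT dI Tmax β p q c η ε))) := by
  obtain ⟨hη0, hη1⟩ := hη
  obtain ⟨hε0, hε1⟩ := hε
  have hδ0 : 0 < dI + q := by positivity
  have hrI : 0 < rI := hδ0.trans hδ
  have hrT : 0 < rT := hrI.trans_le hrIT
  have hA0 : 0 ≤ hcvA Tmax β p c η ε := by
    unfold hcvA
    have := sub_nonneg.2 hη1.le
    have := sub_nonneg.2 hε1.le
    positivity
  have hArI : hcvA Tmax β p c η ε < rI := by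
    rw [hcvA, div_lt_iff₀ hc]
    rw [div_lt_one (by positivity)] at hA
    linarith
  have hsign := hcvH2_hcvT2_nonneg_iff (dT := dT) hs hrT hTmax hc.ne' hδ0 hδ hArI
  have hneg := not_le.symm.trans (hsign.not.trans not_le)
  have hT2 := hcvT2_pos (dT := dT) hs hrT hTmax hc.ne' hδ0 hδ hArI
  refine ⟨hsign.2, fun h _ => hneg.2 h, fun Tstar hTs hroot => ?_⟩
  have hroot_loc := hcvH2_nonneg_iff_le_root hs hq.le hδ.le hrI hrIT hTmax hA0 hT2.le hTs hroot
  exact ⟨fun h => hroot_loc.1 (hsign.2 h),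
    fun h _ => not_le.1 (hroot_loc.not.1 (not_le.2 (hneg.2 h)))⟩

/-- Location of the positive root `T*` of `h₂` relative to `T̃₂` when
`δ < r_I` and `(1-θ)βpT_max/(c r_I) < 1`. -/
theorem hcv_root_location_delta_lt
    (s rT rI dT dI Tmax β p q c η ε : ℝ)
    (hs : 0 < s) (hrT : 0 < rT) (hrI : 0 < rI) (hdT : 0 < dT) (hdI : 0 < dI)
    (hTmax : 0 < Tmax) (hβ : 0 < β) (hp : 0 < p) (hq : 0 < q) (hc : 0 < c)
    (hη : η ∈ Set.Ico (0 : ℝ) 1) (hε : ε ∈ Set.Ico (0 : ℝ) 1)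
    (hrIT : rI ≤ rT) (hsT : s ≤ dT * Tmax) (hdTI : dT ≤ dI)
    (hδ : dI + q < rI)
    (hA : (1 - ε) * (1 - η) * β * p * Tmax / (c * rI) < 1) :
    (hcvR0 s rT rI dT dI Tmax β p q c η ε ≤ 1 →
      0 ≤ hcvH2 s rT rI dT dI Tmax β p q c η ε
        ((rI - (dI + q)) * hcvT0 s rT dT Tmax
          / (rI - (dI + q) * hcvR0 s rT rI dT dI Tmax β p q c η ε))) ∧
    (1 < hcvR0 s rT rI dT dI Tmax β p q c η ε →
      hcvR0 s rT rI dT dI Tmax β p q c η ε < rI / (dI + q) →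
      hcvH2 s rT rI dT dI Tmax β p q c η ε
        ((rI - (dI + q)) * hcvT0 s rT dT Tmax
          / (rI - (dI + q) * hcvR0 s rT rI dT dI Tmax β p q c η ε)) < 0) ∧
    (∀ Tstar : ℝ, 0 < Tstar →
      hcvH2 s rT rI dT dI Tmax β p q c η ε Tstar = 0 →
      (hcvR0 s rT rI dT dI Tmax β p q c η ε ≤ 1 →
        (rI - (dI + q)) * hcvT0 s rT dT Tmax
          / (rI - (dI + q) * hcvR0 s rT rI dT dI Tmax β p q c η ε) ≤ Tstar) ∧
      (1 < hcvR0 s rT rI dT dI Tmax β p q c η ε →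
        hcvR0 s rT rI dT dI Tmax β p q c η ε < rI / (dI + q) →
        Tstar < (rI - (dI + q)) * hcvT0 s rT dT Tmax
          / (rI - (dI + q) * hcvR0 s rT rI dT dI Tmax β p q c η ε))) :=
  hcv_root_location_delta_lt_general s rT rI dT dI Tmax β p q c η ε hs hdI hTmax hβ hp hq hc hη hε
    hrIT hδ hA
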